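/- Under the standing hypotheses, the trace map t_α is a homomorphism of (R^α, R^α)-bimodules and t_α(R) ⊆ R^α, i.e. for every x ∈ R and h ∈ G one has α_h(t_α(x)·1_{h⁻¹}) = t_α(x)·1_h. -/
import Mathlib


universe u

/-- A groupoid in the algebraic sense of Lawson: a non-empty set `G` with a
partially defined binary operation (here modeled by a total operation `mul`
whose value is only constrained when it is defined, i.e. when `d g = r h`),
an inversion `inv`, and domain/range maps `d`, `r`. -/
structure AlgGroupoid (G : Type u) where
  mul : G → G → G
  inv : G → G
  d : G → G
  r : G → G
  mul_assoc' : ∀ g h l, d g = r h → d h = r l → mul (mul g h) l = mul g (mul h l)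
  mul_d : ∀ g, mul g (d g) = g
  r_mul : ∀ g, mul (r g) g = g
  inv_mul : ∀ g, mul (inv g) g = d g
  mul_inv : ∀ g, mul g (inv g) = r g
  d_mul : ∀ g h, d g = r h → d (mul g h) = d h
  r_mul' : ∀ g h, d g = r h → r (mul g h) = r g
  d_inv : ∀ g, d (inv g) = r g
  r_inv : ∀ g, r (inv g) = d g
  inv_inv : ∀ g, inv (inv g) = g
  d_d : ∀ g, d (d g) = d g
  r_d : ∀ g, r (d g) = d g
  d_r : ∀ g, d (r g) = r g
  r_r : ∀ g, r (r g) = r g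

/-- `e` is an identity element of the groupoid `𝔾`, i.e. an element of `G₀`. -/
def AlgGroupoid.isId {G : Type u} (𝔾 : AlgGroupoid G) (e : G) : Prop := 𝔾.d e = e

instance {G : Type u} [DecidableEq G] (𝔾 : AlgGroupoid G) (e : G) : Decidable (𝔾.isId e) :=
  inferInstanceAs (Decidable (𝔾.d e = e))

/-- `D` is a two-sided ideal of `E` (both being subsets of an ambient
non-unital ring `T`). -/
structure IsIdealIn {T : Type u} [NonUnitalRing T] (D E : Set T) : Prop where
  subset : D ⊆ E
  zero_mem : (0 : T) ∈ D
  add_mem : ∀ ⦃x y : T⦄, x ∈ D → y ∈ D → x + y ∈ D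
  neg_mem : ∀ ⦃x : T⦄, x ∈ D → -x ∈ D
  mul_mem_left : ∀ ⦃x y : T⦄, x ∈ E → y ∈ D → x * y ∈ D
  mul_mem_right : ∀ ⦃x y : T⦄, x ∈ D → y ∈ E → x * y ∈ D

/-- `u` is a (two-sided) multiplicative identity element of the subset `D`. -/
def IsIdentityElem {T : Type u} [NonUnitalRing T] (u : T) (D : Set T) : Prop :=
  u ∈ D ∧ ∀ x ∈ D, u * x = x ∧ x * u = x

/-- A partial action `α = ({D_g}, {α_g})` of a groupoid `𝔾` on the ring whose
carrier is the subset `R` of the ambient non-unital ring `T` (take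
`R = Set.univ` for a partial action on `T` itself).  For each `g`, `D (r g)`
is an ideal of `R`, `D g` is an ideal of `D (r g)` and `act g` restricts to a
ring isomorphism from `D (inv g)` onto `D g`; moreover `act e` is the identity
of `D e` for identities `e`, and for composable `g, h` the map `act (mul g h)`
extends `act g ∘ act h` (whose domain is `(act h)⁻¹ (D (inv g) ∩ D h)`). -/
structure PartialGroupoidAction {G : Type u} (𝔾 : AlgGroupoid G) (T : Type u)
    [NonUnitalRing T] (R : Set T) where
  D : G → Set T
  act : G → T → T
  ideal_r : ∀ g, IsIdealIn (D (𝔾.r g)) R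
  ideal : ∀ g, IsIdealIn (D g) (D (𝔾.r g))
  bijOn : ∀ g, Set.BijOn (act g) (D (𝔾.inv g)) (D g)
  map_add : ∀ g, ∀ x ∈ D (𝔾.inv g), ∀ y ∈ D (𝔾.inv g), act g (x + y) = act g x + act g y
  map_mul : ∀ g, ∀ x ∈ D (𝔾.inv g), ∀ y ∈ D (𝔾.inv g), act g (x * y) = act g x * act g y
  act_id : ∀ e, 𝔾.isId e → ∀ x ∈ D e, act e x = x
  dom_cond : ∀ g h, 𝔾.d g = 𝔾.r h → ∀ x ∈ D (𝔾.inv h), act h x ∈ D (𝔾.inv g) →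
    x ∈ D (𝔾.inv (𝔾.mul g h))
  comp_cond : ∀ g h, 𝔾.d g = 𝔾.r h → ∀ x ∈ D (𝔾.inv h), act h x ∈ D (𝔾.inv g) →
    act g (act h x) = act (𝔾.mul g h) x

/-- The partial action `α` is global if, for all composable `g, h`, the
composite `α_g ∘ α_h` (taken on its largest possible domain) coincides with
`α_{gh}`; since both maps always agree on the domain of the composite, this
amounts to the equality of the two domains. -/
def PartialGroupoidAction.IsGlobal {G : Type u} {𝔾 : AlgGroupoid G} {T : Type u}
    [NonUnitalRing T] {R : Set T} (α : PartialGroupoidAction 𝔾 T R) : Prop :=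
  ∀ g h, 𝔾.d g = 𝔾.r h →
    {x | x ∈ α.D (𝔾.inv h) ∧ α.act h x ∈ α.D (𝔾.inv g)} = α.D (𝔾.inv (𝔾.mul g h))

/-- The subring `R^α` of invariants of `R` under the partial action `α`,
where `one g` denotes the identity element `1_g` of the ideal `D_g`. -/
def invariants {G : Type u} (𝔾 : AlgGroupoid G) {R : Type u} [Ring R]
    (α : PartialGroupoidAction 𝔾 R (Set.univ : Set R)) (one : G → R) : Set R :=
  {x : R | ∀ g : G, α.act g (x * one (𝔾.inv g)) = x * one g}

/-- The trace map `t_α : R → R`, `t_α(x) = ∑_{g ∈ G} α_g(x 1_{g⁻¹})`. -/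
def traceMap {G : Type u} [Fintype G] (𝔾 : AlgGroupoid G) {R : Type u} [Ring R]
    (α : PartialGroupoidAction 𝔾 R (Set.univ : Set R)) (one : G → R) (x : R) : R :=
  ∑ g : G, α.act g (x * one (𝔾.inv g))

/-- `R` is an `α`-partial Galois extension of `R^α`: there is a partial Galois
coordinate system `x_i, y_i ∈ R` with
`∑_i x_i α_g(y_i 1_{g⁻¹}) = δ_{e,g} 1_e` for all `e ∈ G₀`, `g ∈ G`. -/
def IsPartialGalois {G : Type u} [Fintype G] [DecidableEq G] (𝔾 : AlgGroupoid G)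
    {R : Type u} [Ring R] (α : PartialGroupoidAction 𝔾 R (Set.univ : Set R))
    (one : G → R) : Prop :=
  ∃ (n : ℕ) (xs ys : Fin n → R), ∀ g : G,
    ∑ i, xs i * α.act g (ys i * one (𝔾.inv g)) = if 𝔾.isId g then one g else 0

namespace AlgGroupoid

variable {G : Type u} (𝔾 : AlgGroupoid G)

lemma isId_d' (g : G) : 𝔾.isId (𝔾.d g) := 𝔾.d_d g
lemma isId_r' (g : G) : 𝔾.isId (𝔾.r g) := 𝔾.d_r g

lemma inv_mul_rev (p q : G) (hc : 𝔾.d p = 𝔾.r q) :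
    𝔾.inv (𝔾.mul p q) = 𝔾.mul (𝔾.inv q) (𝔾.inv p) := by
  have hru : 𝔾.r (𝔾.mul (𝔾.inv q) (𝔾.inv p)) = 𝔾.d q := by
    rw [𝔾.r_mul' _ _ (by rw [𝔾.d_inv, 𝔾.r_inv, hc]), 𝔾.r_inv]
  have h1 : 𝔾.mul q (𝔾.mul (𝔾.inv q) (𝔾.inv p)) = 𝔾.inv p := by
    calc 𝔾.mul q (𝔾.mul (𝔾.inv q) (𝔾.inv p))
        = 𝔾.mul (𝔾.mul q (𝔾.inv q)) (𝔾.inv p) :=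
          (𝔾.mul_assoc' q _ _ (𝔾.r_inv q).symm (by rw [𝔾.d_inv, 𝔾.r_inv, hc])).symm
      _ = 𝔾.mul (𝔾.r q) (𝔾.inv p) := by rw [𝔾.mul_inv]
      _ = 𝔾.mul (𝔾.r (𝔾.inv p)) (𝔾.inv p) := by rw [𝔾.r_inv, hc]
      _ = 𝔾.inv p := 𝔾.r_mul _
  have h2 : 𝔾.mul (𝔾.mul p q) (𝔾.mul (𝔾.inv q) (𝔾.inv p)) = 𝔾.r p := by
    calc 𝔾.mul (𝔾.mul p q) (𝔾.mul (𝔾.inv q) (𝔾.inv p))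
        = 𝔾.mul p (𝔾.mul q (𝔾.mul (𝔾.inv q) (𝔾.inv p))) :=
          𝔾.mul_assoc' p q _ hc hru.symm
      _ = 𝔾.mul p (𝔾.inv p) := by rw [h1]
      _ = 𝔾.r p := 𝔾.mul_inv p
  have e5 : 𝔾.d (𝔾.mul p q) = 𝔾.r (𝔾.mul (𝔾.inv q) (𝔾.inv p)) := by
    rw [𝔾.d_mul p q hc, hru]
  calc 𝔾.inv (𝔾.mul p q)
      = 𝔾.mul (𝔾.inv (𝔾.mul p q)) (𝔾.d (𝔾.inv (𝔾.mul p q))) := (𝔾.mul_d _).symm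
    _ = 𝔾.mul (𝔾.inv (𝔾.mul p q)) (𝔾.r (𝔾.mul p q)) := by rw [𝔾.d_inv]
    _ = 𝔾.mul (𝔾.inv (𝔾.mul p q)) (𝔾.r p) := by rw [𝔾.r_mul' p q hc]
    _ = 𝔾.mul (𝔾.inv (𝔾.mul p q)) (𝔾.mul (𝔾.mul p q) (𝔾.mul (𝔾.inv q) (𝔾.inv p))) := by
        rw [h2]
    _ = 𝔾.mul (𝔾.mul (𝔾.inv (𝔾.mul p q)) (𝔾.mul p q)) (𝔾.mul (𝔾.inv q) (𝔾.inv p)) :=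
        (𝔾.mul_assoc' _ _ _ (𝔾.d_inv _) e5).symm
    _ = 𝔾.mul (𝔾.d (𝔾.mul p q)) (𝔾.mul (𝔾.inv q) (𝔾.inv p)) := by rw [𝔾.inv_mul]
    _ = 𝔾.mul (𝔾.r (𝔾.mul (𝔾.inv q) (𝔾.inv p))) (𝔾.mul (𝔾.inv q) (𝔾.inv p)) := by rw [e5]
    _ = 𝔾.mul (𝔾.inv q) (𝔾.inv p) := 𝔾.r_mul _

lemma mul_invmul (h g : G) (hc : 𝔾.d h = 𝔾.r g) :
    𝔾.mul (𝔾.inv (𝔾.mul h g)) h = 𝔾.inv g := by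
  rw [𝔾.inv_mul_rev h g hc,
    𝔾.mul_assoc' (𝔾.inv g) (𝔾.inv h) h (by rw [𝔾.d_inv, 𝔾.r_inv]; exact hc.symm) (𝔾.d_inv h),
    𝔾.inv_mul, hc, ← 𝔾.d_inv g, 𝔾.mul_d]

lemma inv_cancel_left (h k : G) (hc : 𝔾.r k = 𝔾.r h) : 𝔾.mul h (𝔾.mul (𝔾.inv h) k) = k := by
  rw [← 𝔾.mul_assoc' h (𝔾.inv h) k (𝔾.r_inv h).symm (by rw [𝔾.d_inv, hc]), 𝔾.mul_inv, ← hc]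
  exact 𝔾.r_mul k

lemma inv_cancel_left' (h g : G) (hc : 𝔾.d h = 𝔾.r g) : 𝔾.mul (𝔾.inv h) (𝔾.mul h g) = g := by
  rw [← 𝔾.mul_assoc' (𝔾.inv h) h g (𝔾.d_inv h) hc, 𝔾.inv_mul, hc]
  exact 𝔾.r_mul g

end AlgGroupoid
section RingLemmas

variable {G : Type u} {𝔾 : AlgGroupoid G} {R : Type u} [Ring R]
  {α : PartialGroupoidAction 𝔾 R (Set.univ : Set R)} {one : G → R}

lemma memD (hone : ∀ g, IsIdentityElem (one g) (α.D g)) (x : R) (g : G) :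
    x * one g ∈ α.D g := by
  have h1 : one g ∈ α.D g := (hone g).1
  have h2 : x * one g ∈ α.D (𝔾.r g) :=
    (α.ideal_r g).mul_mem_left (Set.mem_univ x) ((α.ideal g).subset h1)
  have h3 := (α.ideal g).mul_mem_left h2 h1
  have h4 : x * one g * one g = x * one g := by rw [mul_assoc, ((hone g).2 _ h1).1]
  rwa [h4] at h3

lemma mul_one_mem (hone : ∀ g, IsIdentityElem (one g) (α.D g)) {z : R} {g : G}
    (hz : z ∈ α.D g) : z * one g = z := ((hone g).2 z hz).2

lemma one_mul_mem (hone : ∀ g, IsIdentityElem (one g) (α.D g)) {z : R} {g : G}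
    (hz : z ∈ α.D g) : one g * z = z := ((hone g).2 z hz).1

lemma act_zero (g : G) : α.act g 0 = 0 := by
  have h0 : (0 : R) ∈ α.D (𝔾.inv g) := (α.ideal _).zero_mem
  have h := α.map_add g 0 h0 0 h0
  rw [add_zero] at h
  exact (left_eq_add.mp h)

lemma mapsToD {a : R} {g : G} (ha : a ∈ α.D (𝔾.inv g)) : α.act g a ∈ α.D g :=
  (α.bijOn g).mapsTo ha

lemma mapsToDinv {b : R} {g : G} (hb : b ∈ α.D g) : α.act (𝔾.inv g) b ∈ α.D (𝔾.inv g) := by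
  have h := (α.bijOn (𝔾.inv g)).mapsTo
  rw [𝔾.inv_inv] at h
  exact h hb

lemma act_inv_act {a : R} (g : G) (ha : a ∈ α.D (𝔾.inv g)) :
    α.act (𝔾.inv g) (α.act g a) = a := by
  have h1 : α.act g a ∈ α.D (𝔾.inv (𝔾.inv g)) := by
    rw [𝔾.inv_inv]; exact mapsToD ha
  have h2 := α.comp_cond (𝔾.inv g) g (𝔾.d_inv g) a ha h1
  have h3 : a ∈ α.D (𝔾.d g) := by
    have := (α.ideal (𝔾.inv g)).subset ha; rwa [𝔾.r_inv] at this
  rw [h2, 𝔾.inv_mul]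
  exact α.act_id (𝔾.d g) (𝔾.d_d g) a h3

lemma act_act_inv {b : R} (g : G) (hb : b ∈ α.D g) :
    α.act g (α.act (𝔾.inv g) b) = b := by
  have hb' : b ∈ α.D (𝔾.inv (𝔾.inv g)) := by rw [𝔾.inv_inv]; exact hb
  have h := act_inv_act (𝔾.inv g) hb'
  rwa [𝔾.inv_inv] at h

lemma act_mul (hone : ∀ g, IsIdentityElem (one g) (α.D g)) {a : R} (g : G)
    (ha : a ∈ α.D (𝔾.inv g)) (u : R) :
    α.act g a * (u * one g) = α.act g (a * α.act (𝔾.inv g) (u * one g)) := by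
  have h1 : u * one g ∈ α.D g := memD hone u g
  have h2 : α.act (𝔾.inv g) (u * one g) ∈ α.D (𝔾.inv g) := mapsToDinv h1
  rw [α.map_mul g a ha _ h2, act_act_inv g h1]

end RingLemmas
section KeyLemmas

variable {G : Type u} {𝔾 : AlgGroupoid G} {R : Type u} [Ring R]
  {α : PartialGroupoidAction 𝔾 R (Set.univ : Set R)} {one : G → R}

lemma act_one_mul_one (hone : ∀ g, IsIdentityElem (one g) (α.D g))
    (hcentral : ∀ g (x : R), one g * x = x * one g)
    (h g : G) (hc : 𝔾.d h = 𝔾.r g) :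
    α.act h (one (𝔾.inv h) * one g) = one h * one (𝔾.mul h g) := by
  have he1 : one (𝔾.inv h) * one g ∈ α.D g := memD hone _ g
  have he2 : one (𝔾.inv h) * one g ∈ α.D (𝔾.inv h) := by
    rw [hcentral (𝔾.inv h) (one g)]; exact memD hone _ _
  -- c := act h e ∈ D (mul h g)
  have ha0 : one (𝔾.inv h) * one g ∈ α.D (𝔾.inv (𝔾.inv g)) := by rw [𝔾.inv_inv]; exact he1
  have ha1 : α.act (𝔾.inv g) (one (𝔾.inv h) * one g) ∈ α.D (𝔾.inv g) :=
    (α.bijOn (𝔾.inv g)).mapsTo ha0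
  have ha2 : α.act g (α.act (𝔾.inv g) (one (𝔾.inv h) * one g)) = one (𝔾.inv h) * one g :=
    act_act_inv g he1
  have ha3 : α.act (𝔾.inv g) (one (𝔾.inv h) * one g) ∈ α.D (𝔾.inv (𝔾.mul h g)) :=
    α.dom_cond h g hc _ ha1 (by rw [ha2]; exact he2)
  have ha4 : α.act h (α.act g (α.act (𝔾.inv g) (one (𝔾.inv h) * one g)))
      = α.act (𝔾.mul h g) (α.act (𝔾.inv g) (one (𝔾.inv h) * one g)) :=
    α.comp_cond h g hc _ ha1 (by rw [ha2]; exact he2)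
  have hck : α.act h (one (𝔾.inv h) * one g) ∈ α.D (𝔾.mul h g) := by
    rw [← ha2, ha4]; exact (α.bijOn (𝔾.mul h g)).mapsTo ha3
  have hch : α.act h (one (𝔾.inv h) * one g) ∈ α.D h := mapsToD he2
  -- z := act (inv h) (1_k * 1_h)
  have hz0 : one (𝔾.mul h g) * one h ∈ α.D h := memD hone _ h
  have hz0' : one (𝔾.mul h g) * one h ∈ α.D (𝔾.inv (𝔾.inv h)) := by rw [𝔾.inv_inv]; exact hz0
  have hz1 : α.act (𝔾.inv h) (one (𝔾.mul h g) * one h) ∈ α.D (𝔾.inv h) :=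
    (α.bijOn (𝔾.inv h)).mapsTo hz0'
  have hz2 : α.act h (α.act (𝔾.inv h) (one (𝔾.mul h g) * one h)) = one (𝔾.mul h g) * one h :=
    act_act_inv h hz0
  have hz3 : α.act (𝔾.inv h) (one (𝔾.mul h g) * one h) ∈ α.D g := by
    have e1 : 𝔾.d (𝔾.inv (𝔾.mul h g)) = 𝔾.r h := by rw [𝔾.d_inv]; exact 𝔾.r_mul' h g hc
    have e2 : α.act h (α.act (𝔾.inv h) (one (𝔾.mul h g) * one h))
        ∈ α.D (𝔾.inv (𝔾.inv (𝔾.mul h g))) := by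
      rw [𝔾.inv_inv, hz2, hcentral (𝔾.mul h g) (one h)]
      exact memD hone _ _
    have := α.dom_cond (𝔾.inv (𝔾.mul h g)) h e1 _ hz1 e2
    rwa [𝔾.mul_invmul h g hc, 𝔾.inv_inv] at this
  have hez : (one (𝔾.inv h) * one g) * α.act (𝔾.inv h) (one (𝔾.mul h g) * one h)
      = α.act (𝔾.inv h) (one (𝔾.mul h g) * one h) := by
    rw [mul_assoc, one_mul_mem hone hz3, one_mul_mem hone hz1]
  have key : α.act h (one (𝔾.inv h) * one g) * (one (𝔾.mul h g) * one h)
      = one (𝔾.mul h g) * one h := by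
    rw [act_mul hone h he2 (one (𝔾.mul h g)), hez, hz2]
  have habs : α.act h (one (𝔾.inv h) * one g) * (one (𝔾.mul h g) * one h)
      = α.act h (one (𝔾.inv h) * one g) := by
    rw [← mul_assoc, mul_one_mem hone hck, mul_one_mem hone hch]
  exact (habs.symm.trans key).trans (hcentral (𝔾.mul h g) (one h))

lemma idem_pair (hone : ∀ g, IsIdentityElem (one g) (α.D g))
    (hcentral : ∀ g (x : R), one g * x = x * one g) (x : R) (a b : G) :
    (x * one a) * (one a * one b) = (x * one b) * (one b * one a) := by
  have hsa : one a * one a = one a := ((hone a).2 _ (hone a).1).1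
  have hsb : one b * one b = one b := ((hone b).2 _ (hone b).1).1
  have h1 : (x * one a) * (one a * one b) = x * (one a * one b) := by
    rw [mul_assoc, ← mul_assoc (one a) (one a), hsa]
  have h2 : (x * one b) * (one b * one a) = x * (one b * one a) := by
    rw [mul_assoc, ← mul_assoc (one b) (one b), hsb]
  rw [h1, h2, hcentral a (one b)]

end KeyLemmas
section TermLemma

variable {G : Type u} {𝔾 : AlgGroupoid G} {R : Type u} [Ring R]
  {α : PartialGroupoidAction 𝔾 R (Set.univ : Set R)} {one : G → R}

lemma term_eq (hone : ∀ g, IsIdentityElem (one g) (α.D g))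
    (hcentral : ∀ g (x : R), one g * x = x * one g)
    (x : R) (h g : G) (hc : 𝔾.d h = 𝔾.r g) :
    α.act h (α.act g (x * one (𝔾.inv g)) * one (𝔾.inv h)) =
    α.act (𝔾.mul h g) (x * one (𝔾.inv (𝔾.mul h g))) * one h := by
  have hP : x * one (𝔾.inv g) ∈ α.D (𝔾.inv g) := memD hone x (𝔾.inv g)
  -- value of α_{g⁻¹}(1_{h⁻¹}·1_g)
  have hq : α.act (𝔾.inv g) (one (𝔾.inv h) * one g)
      = one (𝔾.inv g) * one (𝔾.inv (𝔾.mul h g)) := by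
    have hcc : 𝔾.d (𝔾.inv g) = 𝔾.r (𝔾.inv h) := by rw [𝔾.d_inv, 𝔾.r_inv]; exact hc.symm
    have hq0 := act_one_mul_one hone hcentral (𝔾.inv g) (𝔾.inv h) hcc
    rw [𝔾.inv_inv, ← 𝔾.inv_mul_rev h g hc, hcentral g (one (𝔾.inv h))] at hq0
    exact hq0
  -- step 1 : absorb and reorder
  have step1 : α.act g (x * one (𝔾.inv g)) * one (𝔾.inv h)
      = α.act g (x * one (𝔾.inv g)) * (one (𝔾.inv h) * one g) := by
    calc α.act g (x * one (𝔾.inv g)) * one (𝔾.inv h)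
        = (α.act g (x * one (𝔾.inv g)) * one g) * one (𝔾.inv h) := by
          rw [mul_one_mem hone (mapsToD hP)]
      _ = α.act g (x * one (𝔾.inv g)) * (one g * one (𝔾.inv h)) := mul_assoc _ _ _
      _ = α.act g (x * one (𝔾.inv g)) * (one (𝔾.inv h) * one g) := by
          rw [← hcentral (𝔾.inv h) (one g)]
  have step2 : α.act g (x * one (𝔾.inv g)) * (one (𝔾.inv h) * one g)
      = α.act g ((x * one (𝔾.inv g)) * α.act (𝔾.inv g) (one (𝔾.inv h) * one g)) :=
    act_mul hone g hP (one (𝔾.inv h))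
  have hyq : α.act (𝔾.inv g) (one (𝔾.inv h) * one g) ∈ α.D (𝔾.inv g) :=
    mapsToDinv (memD hone _ g)
  have hy : (x * one (𝔾.inv g)) * α.act (𝔾.inv g) (one (𝔾.inv h) * one g)
      ∈ α.D (𝔾.inv g) :=
    (α.ideal (𝔾.inv g)).mul_mem_left ((α.ideal (𝔾.inv g)).subset hP) hyq
  have hacty : α.act g ((x * one (𝔾.inv g)) * α.act (𝔾.inv g) (one (𝔾.inv h) * one g))
      ∈ α.D (𝔾.inv h) := by
    rw [← step2, ← step1]
    exact memD hone _ _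
  have hy' := α.dom_cond h g hc _ hy hacty
  have hcomp := α.comp_cond h g hc _ hy hacty
  -- value of α_{k⁻¹}(1_h·1_k)
  have hr : α.act (𝔾.inv (𝔾.mul h g)) (one h * one (𝔾.mul h g))
      = one (𝔾.inv (𝔾.mul h g)) * one (𝔾.inv g) := by
    have hcc2 : 𝔾.d (𝔾.inv (𝔾.mul h g)) = 𝔾.r h := by rw [𝔾.d_inv]; exact 𝔾.r_mul' h g hc
    have hr0 := act_one_mul_one hone hcentral (𝔾.inv (𝔾.mul h g)) h hcc2
    rw [𝔾.inv_inv, 𝔾.mul_invmul h g hc, hcentral (𝔾.mul h g) (one h)] at hr0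
    exact hr0
  have hQ : x * one (𝔾.inv (𝔾.mul h g)) ∈ α.D (𝔾.inv (𝔾.mul h g)) := memD hone x _
  have step1' : α.act (𝔾.mul h g) (x * one (𝔾.inv (𝔾.mul h g))) * one h
      = α.act (𝔾.mul h g) (x * one (𝔾.inv (𝔾.mul h g))) * (one h * one (𝔾.mul h g)) := by
    calc α.act (𝔾.mul h g) (x * one (𝔾.inv (𝔾.mul h g))) * one h
        = (α.act (𝔾.mul h g) (x * one (𝔾.inv (𝔾.mul h g))) * one (𝔾.mul h g)) * one h := by
          rw [mul_one_mem hone (mapsToD hQ)]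
      _ = α.act (𝔾.mul h g) (x * one (𝔾.inv (𝔾.mul h g))) * (one (𝔾.mul h g) * one h) :=
          mul_assoc _ _ _
      _ = α.act (𝔾.mul h g) (x * one (𝔾.inv (𝔾.mul h g))) * (one h * one (𝔾.mul h g)) := by
          rw [← hcentral h (one (𝔾.mul h g))]
  have step2' : α.act (𝔾.mul h g) (x * one (𝔾.inv (𝔾.mul h g))) * (one h * one (𝔾.mul h g))
      = α.act (𝔾.mul h g) ((x * one (𝔾.inv (𝔾.mul h g)))
          * α.act (𝔾.inv (𝔾.mul h g)) (one h * one (𝔾.mul h g))) :=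
    act_mul hone (𝔾.mul h g) hQ (one h)
  rw [step1, step2, hcomp, step1', step2', hq, hr]
  exact congrArg _ (idem_pair hone hcentral x (𝔾.inv g) (𝔾.inv (𝔾.mul h g)))

end TermLemma
section SumLemmas

variable {G : Type u} {𝔾 : AlgGroupoid G} {R : Type u} [Ring R]
  {α : PartialGroupoidAction 𝔾 R (Set.univ : Set R)} {one : G → R}

lemma memD_sum (g' : G) (s : Finset G) (f : G → R)
    (hf : ∀ i ∈ s, f i ∈ α.D g') : ∑ i ∈ s, f i ∈ α.D g' := by
  classical
  induction s using Finset.cons_induction with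
  | empty => simpa using (α.ideal g').zero_mem
  | cons b t hb iht =>
    rw [Finset.sum_cons]
    exact (α.ideal g').add_mem (hf b (Finset.mem_cons_self b t))
      (iht fun i hi => hf i (Finset.mem_cons_of_mem hi))

lemma act_finsum (g : G) (s : Finset G) (f : G → R)
    (hf : ∀ i ∈ s, f i ∈ α.D (𝔾.inv g)) :
    α.act g (∑ i ∈ s, f i) = ∑ i ∈ s, α.act g (f i) := by
  classical
  induction s using Finset.cons_induction with
  | empty => simpa using act_zero (α := α) g
  | cons a s ha ih =>
    rw [Finset.sum_cons, Finset.sum_cons,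
      α.map_add g _ (hf a (Finset.mem_cons_self a s)) _
        (memD_sum _ s f fun i hi => hf i (Finset.mem_cons_of_mem hi)),
      ih (fun i hi => hf i (Finset.mem_cons_of_mem hi))]

lemma split_mul (hone : ∀ g, IsIdentityElem (one g) (α.D g))
    (hcentral : ∀ g (x : R), one g * x = x * one g) (a x : R) (g : G) :
    a * x * one g = (a * one g) * (x * one g) := by
  have hs : one g * one g = one g := ((hone g).2 _ (hone g).1).1
  symm
  rw [mul_assoc a (one g) (x * one g), hcentral g (x * one g),
    mul_assoc x (one g) (one g), hs, ← mul_assoc]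

end SumLemmas
/-- **Lemma 4.2 (first part)**: under the standing hypotheses (`G` a finite
groupoid, each `D_g` unital with identity `1_g`, `R = ⊕_{e ∈ G₀} D_e`), the
trace map `t_α` is a homomorphism of `(R^α, R^α)`-bimodules and
`t_α(R) ⊆ R^α`, i.e. `α_h(t_α(x)·1_{h⁻¹}) = t_α(x)·1_h` for all `x ∈ R`,
`h ∈ G`. -/
theorem traceMap_bimodule_hom_and_invariant {G : Type u} [Nonempty G] [Fintype G]
    [DecidableEq G] (𝔾 : AlgGroupoid G) {R : Type u} [Ring R]
    (α : PartialGroupoidAction 𝔾 R (Set.univ : Set R))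
    (one : G → R) (hone : ∀ g, IsIdentityElem (one g) (α.D g))
    (hcentral : ∀ g (x : R), one g * x = x * one g)
    (horth : ∀ e f, 𝔾.isId e → 𝔾.isId f → e ≠ f → ∀ x ∈ α.D e, ∀ y ∈ α.D f, x * y = 0)
    (hunit : (1 : R) = ∑ e ∈ Finset.univ.filter (fun e => 𝔾.isId e), one e) :
    (∀ x y : R, traceMap 𝔾 α one (x + y) = traceMap 𝔾 α one x + traceMap 𝔾 α one y) ∧
    (∀ a ∈ invariants 𝔾 α one, ∀ x : R,
      traceMap 𝔾 α one (a * x) = a * traceMap 𝔾 α one x ∧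
      traceMap 𝔾 α one (x * a) = traceMap 𝔾 α one x * a) ∧
    (∀ x : R, ∀ h : G,
      α.act h (traceMap 𝔾 α one x * one (𝔾.inv h)) = traceMap 𝔾 α one x * one h) := by
  classical
  refine ⟨?_, ?_, ?_⟩
  · -- additivity
    intro x y
    unfold traceMap
    rw [← Finset.sum_add_distrib]
    refine Finset.sum_congr rfl fun g _ => ?_
    rw [add_mul]
    exact α.map_add g _ (memD hone x _) _ (memD hone y _)
  · -- bimodule homomorphism
    intro a ha x
    constructor
    · unfold traceMap
      rw [Finset.mul_sum]
      refine Finset.sum_congr rfl fun g _ => ?_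
      rw [split_mul hone hcentral a x (𝔾.inv g),
        α.map_mul g _ (memD hone a _) _ (memD hone x _), ha g, mul_assoc,
        one_mul_mem hone (mapsToD (memD hone x _))]
    · unfold traceMap
      rw [Finset.sum_mul]
      refine Finset.sum_congr rfl fun g _ => ?_
      rw [split_mul hone hcentral x a (𝔾.inv g),
        α.map_mul g _ (memD hone x _) _ (memD hone a _), ha g, ← hcentral g a,
        ← mul_assoc, mul_one_mem hone (mapsToD (memD hone x _))]
  · -- invariance of the trace
    intro x h
    unfold traceMap
    rw [Finset.sum_mul,
      act_finsum h Finset.univ _ (fun g _ => memD hone (α.act g (x * one (𝔾.inv g))) (𝔾.inv h)),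
      Finset.sum_mul]
    have hzeroL : ∀ g ∈ Finset.univ,
        α.act h (α.act g (x * one (𝔾.inv g)) * one (𝔾.inv h)) ≠ 0 → 𝔾.d h = 𝔾.r g := by
      intro g _ hne
      by_contra hne2
      apply hne
      have h1 : α.act g (x * one (𝔾.inv g)) ∈ α.D (𝔾.r g) :=
        (α.ideal g).subset (mapsToD (memD hone x _))
      have h2 : one (𝔾.inv h) ∈ α.D (𝔾.d h) := by
        have := (α.ideal (𝔾.inv h)).subset (hone (𝔾.inv h)).1
        rwa [𝔾.r_inv] at this
      rw [horth (𝔾.r g) (𝔾.d h) (𝔾.isId_r' g) (𝔾.isId_d' h) (fun e => hne2 e.symm) _ h1 _ h2]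
      exact act_zero h
    have hzeroR : ∀ k ∈ Finset.univ,
        α.act k (x * one (𝔾.inv k)) * one h ≠ 0 → 𝔾.r k = 𝔾.r h := by
      intro k _ hne
      by_contra hne2
      apply hne
      have h1 : α.act k (x * one (𝔾.inv k)) ∈ α.D (𝔾.r k) :=
        (α.ideal k).subset (mapsToD (memD hone x _))
      have h2 : one h ∈ α.D (𝔾.r h) := (α.ideal h).subset (hone h).1
      exact horth (𝔾.r k) (𝔾.r h) (𝔾.isId_r' k) (𝔾.isId_r' h) hne2 _ h1 _ h2
    rw [← Finset.sum_filter_of_ne hzeroL, ← Finset.sum_filter_of_ne hzeroR]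
    refine Finset.sum_nbij' (fun g => 𝔾.mul h g) (fun k => 𝔾.mul (𝔾.inv h) k) ?_ ?_ ?_ ?_ ?_
    · intro g hg
      simp only [Finset.mem_filter, Finset.mem_univ, true_and] at hg ⊢
      exact 𝔾.r_mul' h g hg
    · intro k hk
      simp only [Finset.mem_filter, Finset.mem_univ, true_and] at hk ⊢
      rw [𝔾.r_mul' (𝔾.inv h) k (by rw [𝔾.d_inv, hk]), 𝔾.r_inv]
    · intro g hg
      simp only [Finset.mem_filter, Finset.mem_univ, true_and] at hg
      exact 𝔾.inv_cancel_left' h g hg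
    · intro k hk
      simp only [Finset.mem_filter, Finset.mem_univ, true_and] at hk
      exact 𝔾.inv_cancel_left h k hk
    · intro g hg
      simp only [Finset.mem_filter, Finset.mem_univ, true_and] at hg
      exact term_eq hone hcentral x h g hg
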